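/- Fix an integer j ≥ 2, a real number s, and a time t > 0. There exist a constant c > 0 and an integer N₀ such that for every integer N ≥ N₀, the third Picard iterate at the data φ_N satisfies ‖A₃(φ_N)(t)‖_{Ḣ^s} ≥ c·N^{−2s−(2j−1)}. -/

import Mathlib

open MeasureTheory
open scoped ENNReal

noncomputable section

/-- Dispersion `P(k) = (−1)^{j+1} k^{2j+1}` of the higher-order KdV equation. -/
def disp (j : ℕ) (k : ℤ) : ℝ := (-1 : ℝ) ^ (j + 1) * (k : ℝ) ^ (2 * j + 1)

/-- Fourier coefficients of the free evolution `u₁(t) = S(t)u₀`, where `a` is the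
(zero-mean) sequence of Fourier coefficients of `u₀`. -/
def c1 (j : ℕ) (a : ℤ → ℂ) (k : ℤ) (t : ℝ) : ℂ :=
  Complex.exp (Complex.I * (disp j k : ℝ) * (t : ℝ)) * a k

/-- Fourier coefficients of the Duhamel term `∫₀ᵗ S(t−s)∂_x(u v) ds`, computed
coefficientwise: the `k`-th coefficient of `∂_x(uv)(s)` is `i k Σ_{k₁} c(k₁,s) d(k−k₁,s)`. -/
def duh (j : ℕ) (c d : ℤ → ℝ → ℂ) (k : ℤ) (t : ℝ) : ℂ :=
  ∫ s in (0 : ℝ)..t, Complex.exp (Complex.I * (disp j k : ℝ) * ((t - s : ℝ))) *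
    (Complex.I * (k : ℂ) * ∑' k₁ : ℤ, c k₁ s * d (k - k₁) s)

/-- Fourier coefficients of the second Picard iterate
`A₂(u₀)(t) = ∫₀ᵗ S(t−s)∂_x[(u₁(s))²] ds`. -/
def A2 (j : ℕ) (a : ℤ → ℂ) (k : ℤ) (t : ℝ) : ℂ := duh j (c1 j a) (c1 j a) k t

/-- Fourier coefficients of the third Picard iterate
`A₃(u₀)(t) = 2∫₀ᵗ S(t−s)∂_x[u₁(s)·A₂(u₀)(s)] ds`. -/
def A3 (j : ℕ) (a : ℤ → ℂ) (k : ℤ) (t : ℝ) : ℂ := 2 * duh j (c1 j a) (A2 j a) k t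

/-- Homogeneous Sobolev norm `‖v‖_{Ḣ^s} = (Σ_{k≠0}|k|^{2s}|v̂(k)|²)^{1/2}`. -/
def HdotS (s : ℝ) (v : ℤ → ℂ) : ℝ≥0∞ :=
  (∑' k : ℤ, if k = 0 then 0 else
    ENNReal.ofReal (|(k : ℝ)| ^ (2 * s)) * (‖v k‖₊ : ℝ≥0∞) ^ 2) ^ (1 / 2 : ℝ)

/-- Fourier coefficients of `φ_N(x) = N^{−s}(e^{iNx} + e^{−iNx})`. -/
def phi (s : ℝ) (N : ℕ) : ℤ → ℂ :=
  fun k => if k = (N : ℤ) ∨ k = -(N : ℤ) then (((N : ℝ) ^ (-s) : ℝ) : ℂ) else 0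

/-! The data `φ_N` lives on the frequencies `±N`, so the Picard iterates can be computed exactly.
`A₂(φ_N)` at frequency `2N` is `(2N·N^{-2s}/D)(e^{2iP(N)σ} - e^{iP(2N)σ})`, with resonance
`D = 2P(N) - P(2N) = (2 - 2^{2j+1})P(N)`, and the only interaction reaching frequency `N` in `A₃`
is `N = -N + 2N`. Multiplied by the mode `e^{-iP(N)σ}` of `u₁`, the first term of `A₂` is exactly
resonant with the free evolution at frequency `N`, so its Duhamel integral grows like `t`, while
the other one contributes at most `2/|D|`. Hence `|A₃(φ_N)(N, t)| ≳ t·N²·N^{-3s}/|D|`, and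
`|D| ≈ N^{2j+1}`. -/

open Complex

lemma disp_neg (j : ℕ) (k : ℤ) : disp j (-k) = -disp j k := by
  have hodd : Odd (2 * j + 1) := ⟨j, rfl⟩
  simp only [disp, Int.cast_neg, hodd.neg_pow]
  ring

lemma abs_disp (j : ℕ) (k : ℤ) : |disp j k| = |(k : ℝ)| ^ (2 * j + 1) := by
  simp [disp, abs_mul, abs_pow]

def resonance (j : ℕ) (k : ℤ) : ℝ := 2 * disp j k - disp j (2 * k)

lemma resonance_eq (j : ℕ) (k : ℤ) :
    resonance j k = (2 - 2 ^ (2 * j + 1)) * disp j k := by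
  simp only [resonance, disp]
  push_cast
  ring

lemma abs_resonance_natCast (j N : ℕ) :
    |resonance j N| = (2 ^ (2 * j + 1) - 2) * (N : ℝ) ^ (2 * j + 1) := by
  have h2 : (2 : ℝ) ≤ 2 ^ (2 * j + 1) := le_self_pow₀ one_le_two (by omega)
  rw [resonance_eq, abs_mul, abs_disp, abs_of_nonpos (by linarith), Int.cast_natCast,
    Nat.abs_cast]
  ring

lemma norm_exp_I_mul_ofReal_mul_ofReal (a b : ℝ) : ‖exp (I * a * b)‖ = 1 := by
  rw [mul_assoc, ← ofReal_mul, norm_exp_I_mul_ofReal]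

lemma integral_exp_I_mul_of_ne {l : ℝ} (hl : l ≠ 0) (t : ℝ) :
    ∫ σ in (0 : ℝ)..t, exp (I * l * σ) = (exp (I * l * t) - 1) / (I * l) := by
  simpa using integral_exp_mul_complex (a := 0) (b := t) (by simpa using hl : I * (l : ℂ) ≠ 0)

lemma norm_integral_exp_I_mul_le {l : ℝ} (hl : l ≠ 0) (t : ℝ) :
    ‖∫ σ in (0 : ℝ)..t, exp (I * l * σ)‖ ≤ 2 / |l| := by
  rw [integral_exp_I_mul_of_ne hl, norm_div, norm_mul, norm_I, one_mul, norm_real,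
    Real.norm_eq_abs]
  gcongr
  calc ‖exp (I * l * t) - 1‖ ≤ ‖exp (I * l * t)‖ + ‖(1 : ℂ)‖ := norm_sub_le _ _
    _ = 2 := by rw [norm_exp_I_mul_ofReal_mul_ofReal, norm_one]; norm_num

lemma half_le_norm_sub_integral_exp_I_mul {l t : ℝ} (ht : 0 < t) (hl : 4 / t ≤ |l|) :
    t / 2 ≤ ‖(t : ℂ) - ∫ σ in (0 : ℝ)..t, exp (I * l * σ)‖ := by
  have hl0 : 0 < |l| := (by positivity : 0 < 4 / t).trans_le hl
  have hsmall : 2 / |l| ≤ t / 2 := by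
    rw [div_le_iff₀ ht] at hl
    rw [div_le_div_iff₀ hl0 two_pos]
    linarith
  calc t / 2 ≤ t - 2 / |l| := by linarith
    _ ≤ ‖(t : ℂ)‖ - ‖∫ σ in (0 : ℝ)..t, exp (I * l * σ)‖ := by
        rw [norm_real, Real.norm_eq_abs, abs_of_pos ht]
        gcongr
        exact norm_integral_exp_I_mul_le (abs_pos.mp hl0) t
    _ ≤ _ := norm_sub_norm_le _ _

lemma integral_exp_I_mul_sub_mul_exp (P ω t : ℝ) :
    ∫ σ in (0 : ℝ)..t, exp (I * P * ((t - σ : ℝ) : ℂ)) * exp (I * ω * σ)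
      = exp (I * P * t) * ∫ σ in (0 : ℝ)..t, exp (I * (ω - P : ℝ) * σ) := by
  rw [← intervalIntegral.integral_const_mul]
  congr 1 with σ
  rw [← exp_add, ← exp_add]
  push_cast
  ring_nf

lemma ofReal_abs_rpow_mul_norm_le_HdotS (s : ℝ) (v : ℤ → ℂ) {k : ℤ} (hk : k ≠ 0) :
    ENNReal.ofReal (|(k : ℝ)| ^ s * ‖v k‖) ≤ HdotS s v := by
  have hk_pos : 0 ≤ |(k : ℝ)| ^ s := by positivity
  have hsq : ENNReal.ofReal (|(k : ℝ)| ^ s * ‖v k‖) ^ (2 : ℝ)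
      = ENNReal.ofReal (|(k : ℝ)| ^ (2 * s)) * (‖v k‖₊ : ℝ≥0∞) ^ 2 := by
    rw [ENNReal.rpow_two, ENNReal.ofReal_mul hk_pos, ofReal_norm, enorm_eq_nnnorm, mul_pow,
      ← ENNReal.ofReal_pow hk_pos, ← Real.rpow_natCast, ← Real.rpow_mul (abs_nonneg _)]
    norm_num [mul_comm]
  have hterm := ENNReal.le_tsum (f := fun k : ℤ => if k = 0 then 0 else
    ENNReal.ofReal (|(k : ℝ)| ^ (2 * s)) * (‖v k‖₊ : ℝ≥0∞) ^ 2) k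
  rw [if_neg hk, ← hsq] at hterm
  calc ENNReal.ofReal (|(k : ℝ)| ^ s * ‖v k‖)
      = (ENNReal.ofReal (|(k : ℝ)| ^ s * ‖v k‖) ^ (2 : ℝ)) ^ (1 / 2 : ℝ) := by
        rw [← ENNReal.rpow_mul]; norm_num
    _ ≤ HdotS s v := ENNReal.rpow_le_rpow hterm (by norm_num)

section Picard

variable {j : ℕ} {s : ℝ} {N : ℕ}

lemma c1_phi (k : ℤ) (σ : ℝ) :
    c1 j (phi s N) k σ
      = if k = N ∨ k = -N then exp (I * disp j k * σ) * ((N : ℝ) ^ (-s) : ℝ) else 0 := by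
  unfold c1 phi
  split_ifs <;> simp

lemma tsum_c1_phi_mul (hN : N ≠ 0) (d : ℤ → ℝ → ℂ) (k : ℤ) (σ : ℝ) :
    ∑' k₁, c1 j (phi s N) k₁ σ * d (k - k₁) σ
      = c1 j (phi s N) N σ * d (k - N) σ + c1 j (phi s N) (-N) σ * d (k + N) σ := by
  have hNZ : (N : ℤ) ≠ -N := by omega
  rw [tsum_eq_sum (s := {(N : ℤ), -(N : ℤ)}), Finset.sum_pair hNZ, sub_neg_eq_add]
  intro k₁ hk₁
  simp only [Finset.mem_insert, Finset.mem_singleton, not_or] at hk₁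
  simp [c1_phi, hk₁]

lemma A2_phi_two_mul (hN : N ≠ 0) (hD : resonance j N ≠ 0) (σ : ℝ) :
    A2 j (phi s N) (2 * N) σ
      = (2 * N * ((N : ℝ) ^ (-s)) ^ 2 / resonance j N : ℝ)
        * (exp (I * (2 * disp j N : ℝ) * σ) - exp (I * disp j (2 * N) * σ)) := by
  have hconv : ∀ τ : ℝ, ∑' k₁, c1 j (phi s N) k₁ τ * c1 j (phi s N) (2 * N - k₁) τ
      = (((N : ℝ) ^ (-s)) ^ 2 : ℝ) * exp (I * (2 * disp j N : ℝ) * τ) := by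
    intro τ
    rw [tsum_c1_phi_mul hN, show 2 * (N : ℤ) - N = N by ring, c1_phi (2 * N + N),
      if_neg (by omega), mul_zero, add_zero, c1_phi, if_pos (Or.inl rfl),
      show I * ((2 * disp j N : ℝ) : ℂ) * τ = I * disp j N * τ + I * disp j N * τ by
        push_cast; ring, exp_add]
    push_cast
    ring
  have hexp : exp (I * (2 * disp j N : ℝ) * σ)
      = exp (I * disp j (2 * N) * σ) * exp (I * resonance j N * σ) := by
    rw [← exp_add, resonance]
    push_cast
    ring_nf
  simp only [A2, duh, hconv, mul_left_comm (exp _) (I * _),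
    mul_left_comm (exp _) (((_ : ℝ) : ℂ))]
  rw [intervalIntegral.integral_const_mul, intervalIntegral.integral_const_mul,
    integral_exp_I_mul_sub_mul_exp, ← resonance, integral_exp_I_mul_of_ne hD, hexp]
  field_simp
  push_cast
  ring

lemma A3_phi_natCast (hN : N ≠ 0) (hD : resonance j N ≠ 0) (t : ℝ) :
    A3 j (phi s N) N t
      = 2 * I * N * (2 * N * ((N : ℝ) ^ (-s)) ^ 3 / resonance j N : ℝ)
        * exp (I * disp j N * t)
        * (t - ∫ σ in (0 : ℝ)..t, exp (I * (-resonance j N : ℝ) * σ)) := by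
  set K : ℝ := 2 * N * ((N : ℝ) ^ (-s)) ^ 3 / resonance j N
  have hconv : ∀ τ : ℝ, ∑' k₁, c1 j (phi s N) k₁ τ * A2 j (phi s N) (N - k₁) τ
      = K * (exp (I * disp j N * τ) - exp (I * (disp j (2 * N) - disp j N : ℝ) * τ)) := by
    intro τ
    have hA2_zero : A2 j (phi s N) 0 τ = 0 := by simp [A2, duh]
    rw [tsum_c1_phi_mul hN, sub_self, hA2_zero, mul_zero, zero_add,
      show (N : ℤ) + N = 2 * N by ring, A2_phi_two_mul hN hD, c1_phi (-N), if_pos (Or.inr rfl),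
      disp_neg]
    have hres : exp (I * disp j N * τ)
        = exp (I * (-disp j N : ℝ) * τ) * exp (I * (2 * disp j N : ℝ) * τ) := by
      rw [← exp_add]; push_cast; ring_nf
    have hnonres : exp (I * (disp j (2 * N) - disp j N : ℝ) * τ)
        = exp (I * (-disp j N : ℝ) * τ) * exp (I * disp j (2 * N) * τ) := by
      rw [← exp_add]; push_cast; ring_nf
    rw [hres, hnonres]
    simp only [K]
    push_cast
    ring
  have hintegrand : ∀ σ : ℝ, exp (I * disp j N * ((t - σ : ℝ) : ℂ))
        * (I * (N : ℤ) * (K * (exp (I * disp j N * σ)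
          - exp (I * (disp j (2 * N) - disp j N : ℝ) * σ))))
      = (I * N * K) * (exp (I * disp j N * ((t - σ : ℝ) : ℂ)) * exp (I * disp j N * σ)
        - exp (I * disp j N * ((t - σ : ℝ) : ℂ))
          * exp (I * (disp j (2 * N) - disp j N : ℝ) * σ)) := by
    intro σ; push_cast; ring
  simp only [A3, duh, hconv, hintegrand]
  rw [intervalIntegral.integral_const_mul, intervalIntegral.integral_sub
    (Continuous.intervalIntegrable (by fun_prop) _ _)
    (Continuous.intervalIntegrable (by fun_prop) _ _),
    integral_exp_I_mul_sub_mul_exp, integral_exp_I_mul_sub_mul_exp, sub_self,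
    show disp j (2 * N) - disp j N - disp j N = -resonance j N by rw [resonance]; ring]
  simp only [ofReal_zero, mul_zero, zero_mul, exp_zero, intervalIntegral.integral_const,
    sub_zero, real_smul, mul_one]
  push_cast
  ring

lemma norm_A3_phi_natCast_ge {t : ℝ} (ht : 0 < t) (hN : N ≠ 0)
    (hD : 4 / t ≤ |resonance j N|) :
    2 * t * N ^ 2 * ((N : ℝ) ^ (-s)) ^ 3 / |resonance j N|
      ≤ ‖A3 j (phi s N) N t‖ := by
  have hD0 : resonance j N ≠ 0 :=
    abs_pos.mp ((by positivity : 0 < 4 / t).trans_le hD)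
  have hbracket := half_le_norm_sub_integral_exp_I_mul ht (l := -resonance j N)
    (by rwa [abs_neg])
  rw [A3_phi_natCast hN hD0]
  simp only [norm_mul, norm_ofNat, norm_I, norm_natCast, norm_real, Real.norm_eq_abs,
    norm_exp_I_mul_ofReal_mul_ofReal, abs_div, abs_mul, abs_pow, Nat.abs_cast]
  rw [abs_two, abs_of_pos (by positivity : (0 : ℝ) < (N : ℝ) ^ (-s))]
  calc _ = 2 * 1 * N * (2 * N * ((N : ℝ) ^ (-s)) ^ 3 / |resonance j N|) * 1
        * (t / 2) := by ring
    _ ≤ _ := by gcongr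

lemma le_rpow_mul_norm_A3_phi (hj : 1 ≤ j) {t : ℝ} (ht : 0 < t) (hN : 4 / t ≤ N) :
    2 * t / (2 ^ (2 * j + 1) - 2) * (N : ℝ) ^ (-2 * s - (2 * (j : ℝ) - 1))
      ≤ (N : ℝ) ^ s * ‖A3 j (phi s N) N t‖ := by
  have hNpos : (0 : ℝ) < N := (by positivity : (0 : ℝ) < 4 / t).trans_le hN
  have hC : (1 : ℝ) ≤ 2 ^ (2 * j + 1) - 2 := by
    have : (2 : ℝ) ^ 3 ≤ 2 ^ (2 * j + 1) := pow_le_pow_right₀ one_le_two (by omega)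
    linarith
  have habsD := abs_resonance_natCast j N
  have hDt : 4 / t ≤ |resonance j N| :=
    calc 4 / t ≤ N := hN
      _ ≤ (N : ℝ) ^ (2 * j + 1) := le_self_pow₀ (by exact_mod_cast hNpos) (by omega)
      _ ≤ _ := by rw [habsD]; exact le_mul_of_one_le_left (by positivity) hC
  have hpow : (N : ℝ) ^ s * ((N : ℝ) ^ 2 * ((N : ℝ) ^ (-s)) ^ 3 / (N : ℝ) ^ (2 * j + 1))
      = (N : ℝ) ^ (-2 * s - (2 * (j : ℝ) - 1)) := by
    rw [← Real.rpow_natCast ((N : ℝ) ^ (-s)), ← Real.rpow_mul hNpos.le,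
      ← Real.rpow_natCast (N : ℝ) 2, ← Real.rpow_natCast (N : ℝ) (2 * j + 1),
      ← Real.rpow_add hNpos, ← Real.rpow_sub hNpos, ← Real.rpow_add hNpos]
    push_cast
    ring_nf
  calc _ = (N : ℝ) ^ s * (2 * t * N ^ 2 * ((N : ℝ) ^ (-s)) ^ 3
        / |resonance j N|) := by
        rw [habsD, ← hpow]
        field_simp
    _ ≤ _ := by
        gcongr
        exact norm_A3_phi_natCast_ge ht (by exact_mod_cast hNpos.ne') hDt

end Picard

/-- **Estimate (6.03):** the third Picard iterate at the data `φ_N` satisfies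
`‖A₃(φ_N)(t)‖_{Ḣ^s} ≥ c·N^{−2s−(2j−1)}` for all large `N`. -/
theorem stmt_17 (j : ℕ) (hj : 2 ≤ j) (s t : ℝ) (ht : 0 < t) :
    ∃ c : ℝ, 0 < c ∧ ∃ N₀ : ℕ, ∀ N : ℕ, N₀ ≤ N →
      ENNReal.ofReal (c * (N : ℝ) ^ (-2 * s - (2 * (j : ℝ) - 1))) ≤
        HdotS s (fun k => A3 j (phi s N) k t) := by
  have hC : (0 : ℝ) < 2 ^ (2 * j + 1) - 2 := by
    have : (2 : ℝ) ^ 1 < 2 ^ (2 * j + 1) := pow_lt_pow_right₀ one_lt_two (by omega)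
    linarith
  refine ⟨2 * t / (2 ^ (2 * j + 1) - 2), by positivity, ⌈4 / t⌉₊, fun N hN => ?_⟩
  have hN4 : 4 / t ≤ N := (Nat.le_ceil _).trans (by exact_mod_cast hN)
  have hN0 : (N : ℤ) ≠ 0 := by
    have : (0 : ℝ) < N := (by positivity : (0 : ℝ) < 4 / t).trans_le hN4
    exact_mod_cast this.ne'
  calc _ ≤ ENNReal.ofReal ((N : ℝ) ^ s * ‖A3 j (phi s N) N t‖) :=
        ENNReal.ofReal_le_ofReal (le_rpow_mul_norm_A3_phi (by omega) ht hN4)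
    _ = ENNReal.ofReal (|((N : ℤ) : ℝ)| ^ s * ‖A3 j (phi s N) N t‖) := by
        rw [Int.cast_natCast, Nat.abs_cast]
    _ ≤ _ := ofReal_abs_rpow_mul_norm_le_HdotS s _ hN0
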